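/- arXiv:1901.00058 — 2 statements merged into one kernel-verified Lean document; each statement's English description precedes it below -/
import Mathlib

section
/- Let W : GL⁺(2) → ℝ be the planar isochoric St. Venant–Kirchhoff energy, W(F) := ‖(FᵀF)/(det F) − 𝟙‖², where 𝟙 is the 2×2 identity matrix and ‖·‖ the Frobenius norm. Then for every F ∈ GL⁺(2) with singular values λ₁, λ₂, W(F) = (λ₁/λ₂ − 1)² + (λ₂/λ₁ − 1)² = 4·(𝕂(F)² − 𝕂(F)), and W is polyconvex (hence quasiconvex and rank-one convex). -/
open Matrix MeasureTheory Set

noncomputable section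

/-- The space of real 2×2 matrices. -/
abbrev Mat2 := Matrix (Fin 2) (Fin 2) ℝ

/-- Squared Frobenius norm of a 2×2 matrix. -/
def frobSq (F : Mat2) : ℝ := ∑ i, ∑ j, (F i j) ^ 2

/-- The special orthogonal group SO(2). -/
def SO2 (R : Mat2) : Prop := R.transpose * R = 1 ∧ R.det = 1

/-- The conformal special orthogonal group CSO(2) = (0,∞)·SO(2). -/
def CSO2 (A : Mat2) : Prop := ∃ a : ℝ, 0 < a ∧ ∃ R : Mat2, SO2 R ∧ A = a • R

/-- Conformal invariance of an energy `W : GL⁺(2) → ℝ`. -/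
def ConfInv (W : Mat2 → ℝ) : Prop :=
  ∀ F : Mat2, 0 < F.det → ∀ A B : Mat2, CSO2 A → CSO2 B → W (A * F * B) = W F

/-- `l1, l2` are the singular values of `F` (in either order): they are positive and their
product and sum of squares agree with `det F` and the squared Frobenius norm of `F`. -/
def SingVals (F : Mat2) (l1 l2 : ℝ) : Prop :=
  0 < l1 ∧ 0 < l2 ∧ l1 * l2 = F.det ∧ l1 ^ 2 + l2 ^ 2 = frobSq F

/-- `l1 ≥ l2` are the ordered singular values of `F`. -/
def OrdSingVals (F : Mat2) (l1 l2 : ℝ) : Prop := SingVals F l1 l2 ∧ l2 ≤ l1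

/-- The larger singular value of a 2×2 matrix with positive determinant. -/
def sv1 (F : Mat2) : ℝ :=
  Real.sqrt ((frobSq F + Real.sqrt (frobSq F ^ 2 - 4 * F.det ^ 2)) / 2)

/-- The smaller singular value of a 2×2 matrix with positive determinant. -/
def sv2 (F : Mat2) : ℝ :=
  Real.sqrt ((frobSq F - Real.sqrt (frobSq F ^ 2 - 4 * F.det ^ 2)) / 2)

/-- The distortion 𝕂(F) = ‖F‖²/(2 det F). -/
def Kdist (F : Mat2) : ℝ := frobSq F / (2 * F.det)

/-- Rank-one convexity of an energy on GL⁺(2). -/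
def RankOneConvex (W : Mat2 → ℝ) : Prop :=
  ∀ F : Mat2, 0 < F.det → ∀ H : Mat2, H.rank = 1 → 0 < (F + H).det →
    ∀ t : ℝ, 0 ≤ t → t ≤ 1 → W (F + t • H) ≤ (1 - t) * W F + t * W (F + H)

/-- The gradient (Jacobian matrix) of a map ϑ : ℝ² → ℝ². -/
def gradMat (ϑ : (Fin 2 → ℝ) → (Fin 2 → ℝ)) (x : Fin 2 → ℝ) : Mat2 :=
  Matrix.of fun i j => fderiv ℝ ϑ x (Pi.single j 1) i

/-- Quasiconvexity of an energy on GL⁺(2). -/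
def Quasiconvex2 (W : Mat2 → ℝ) : Prop :=
  ∀ Ω : Set (Fin 2 → ℝ), IsOpen Ω → Bornology.IsBounded Ω →
    ∀ F₀ : Mat2, 0 < F₀.det →
    ∀ ϑ : (Fin 2 → ℝ) → (Fin 2 → ℝ), ContDiff ℝ (⊤ : ℕ∞) ϑ → HasCompactSupport ϑ →
      tsupport ϑ ⊆ Ω → (∀ x ∈ Ω, 0 < (F₀ + gradMat ϑ x).det) →
      W F₀ * (volume Ω).toReal ≤ ∫ x in Ω, W (F₀ + gradMat ϑ x)

/-- Polyconvexity of an energy on GL⁺(2): `W(F) = P(F, det F)` for some convex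
function `P : ℝ^{2×2} × ℝ → ℝ ∪ {+∞}`. -/
def Polyconvex (W : Mat2 → ℝ) : Prop :=
  ∃ P : Mat2 × ℝ → EReal,
    (∀ X Y : Mat2 × ℝ, ∀ t : ℝ, 0 ≤ t → t ≤ 1 →
      P (t • X + (1 - t) • Y) ≤ (t : ℝ) * P X + ((1 - t : ℝ) : EReal) * P Y) ∧
    (∀ F : Mat2, 0 < F.det → (W F : EReal) = P (F, F.det))

/-- The rank-one convex envelope of `W` on GL⁺(2). -/
def RWenv (W : Mat2 → ℝ) (F : Mat2) : ℝ :=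
  sSup {y | ∃ w : Mat2 → ℝ, RankOneConvex w ∧ (∀ X : Mat2, 0 < X.det → w X ≤ W X) ∧ y = w F}

/-- The quasiconvex envelope of `W` on GL⁺(2). -/
def QWenv (W : Mat2 → ℝ) (F : Mat2) : ℝ :=
  sSup {y | ∃ w : Mat2 → ℝ, Quasiconvex2 w ∧ (∀ X : Mat2, 0 < X.det → w X ≤ W X) ∧ y = w F}

/-- The polyconvex envelope of `W` on GL⁺(2). -/
def PWenv (W : Mat2 → ℝ) (F : Mat2) : ℝ :=
  sSup {y | ∃ w : Mat2 → ℝ, Polyconvex w ∧ (∀ X : Mat2, 0 < X.det → w X ≤ W X) ∧ y = w F}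

/-- The monotone-convex envelope of `h : [1,∞) → ℝ`. -/
def CmEnv (h : ℝ → ℝ) (t : ℝ) : ℝ :=
  sSup {y | ∃ p : ℝ → ℝ, ConvexOn ℝ (Set.Ici (1 : ℝ)) p ∧ MonotoneOn p (Set.Ici (1 : ℝ)) ∧
    (∀ s : ℝ, 1 ≤ s → p s ≤ h s) ∧ y = p t}

/-- The convex envelope of `h : [1,∞) → ℝ`. -/
def CEnv (h : ℝ → ℝ) (t : ℝ) : ℝ :=
  sSup {y | ∃ p : ℝ → ℝ, ConvexOn ℝ (Set.Ici (1 : ℝ)) p ∧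
    (∀ s : ℝ, 1 ≤ s → p s ≤ h s) ∧ y = p t}

/-- The special orthogonal group SO(n). -/
def SOnN {n : ℕ} (R : Matrix (Fin n) (Fin n) ℝ) : Prop := R.transpose * R = 1 ∧ R.det = 1

/-- The conformal special orthogonal group CSO(n) = (0,∞)·SO(n). -/
def CSOnN {n : ℕ} (A : Matrix (Fin n) (Fin n) ℝ) : Prop :=
  ∃ a : ℝ, 0 < a ∧ ∃ R : Matrix (Fin n) (Fin n) ℝ, SOnN R ∧ A = a • R

/-- Conformal invariance of an energy `W : GL⁺(n) → ℝ`. -/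
def ConfInvN {n : ℕ} (W : Matrix (Fin n) (Fin n) ℝ → ℝ) : Prop :=
  ∀ F : Matrix (Fin n) (Fin n) ℝ, 0 < F.det →
    ∀ A B : Matrix (Fin n) (Fin n) ℝ, CSOnN A → CSOnN B → W (A * F * B) = W F

/-- Rank-one convexity of an energy on GL⁺(n). -/
def RankOneConvexN {n : ℕ} (W : Matrix (Fin n) (Fin n) ℝ → ℝ) : Prop :=
  ∀ F : Matrix (Fin n) (Fin n) ℝ, 0 < F.det →
    ∀ H : Matrix (Fin n) (Fin n) ℝ, H.rank = 1 → 0 < (F + H).det →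
    ∀ t : ℝ, 0 ≤ t → t ≤ 1 → W (F + t • H) ≤ (1 - t) * W F + t * W (F + H)

/-- The gradient (Jacobian matrix) of a map ϑ : ℝⁿ → ℝⁿ. -/
def gradMatN {n : ℕ} (ϑ : (Fin n → ℝ) → (Fin n → ℝ)) (x : Fin n → ℝ) :
    Matrix (Fin n) (Fin n) ℝ :=
  Matrix.of fun i j => fderiv ℝ ϑ x (Pi.single j 1) i

/-- Quasiconvexity of an energy on GL⁺(n). -/
def QuasiconvexN {n : ℕ} (W : Matrix (Fin n) (Fin n) ℝ → ℝ) : Prop :=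
  ∀ Ω : Set (Fin n → ℝ), IsOpen Ω → Bornology.IsBounded Ω →
    ∀ F₀ : Matrix (Fin n) (Fin n) ℝ, 0 < F₀.det →
    ∀ ϑ : (Fin n → ℝ) → (Fin n → ℝ), ContDiff ℝ (⊤ : ℕ∞) ϑ → HasCompactSupport ϑ →
      tsupport ϑ ⊆ Ω → (∀ x ∈ Ω, 0 < (F₀ + gradMatN ϑ x).det) →
      W F₀ * (volume Ω).toReal ≤ ∫ x in Ω, W (F₀ + gradMatN ϑ x)

/-- The rank-one convex envelope of `W` on GL⁺(n). -/
def RWenvN {n : ℕ} (W : Matrix (Fin n) (Fin n) ℝ → ℝ) (F : Matrix (Fin n) (Fin n) ℝ) : ℝ :=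
  sSup {y | ∃ w : Matrix (Fin n) (Fin n) ℝ → ℝ, RankOneConvexN w ∧
    (∀ X : Matrix (Fin n) (Fin n) ℝ, 0 < X.det → w X ≤ W X) ∧ y = w F}

/-- The quasiconvex envelope of `W` on GL⁺(n). -/
def QWenvN {n : ℕ} (W : Matrix (Fin n) (Fin n) ℝ → ℝ) (F : Matrix (Fin n) (Fin n) ℝ) : ℝ :=
  sSup {y | ∃ w : Matrix (Fin n) (Fin n) ℝ → ℝ, QuasiconvexN w ∧
    (∀ X : Matrix (Fin n) (Fin n) ℝ, 0 < X.det → w X ≤ W X) ∧ y = w F}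

end
/-- The planar isochoric St. Venant–Kirchhoff energy `W(F) = ‖FᵀF/det F − 𝟙‖²`. -/
noncomputable def WSVK (F : Mat2) : ℝ := frobSq ((F.det)⁻¹ • (F.transpose * F) - 1)

/-! Put `q = ‖F‖² / det F`. For singular values `λ₁, λ₂` one has `q = λ₁/λ₂ + λ₂/λ₁ = 2 𝕂(F)`, and a
direct computation gives `W(F) = q² − 2q` with `q ≥ 2`. Hence `W(F) = P(F, det F)` for
`P(X, δ) = φ(‖X‖²/δ)` if `δ > 0` and `P = +∞` otherwise, where `φ(x) = (x² − 2x)⁺` is convex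
and nondecreasing on `[0, ∞)`, and `(X, δ) ↦ ‖X‖²/δ` is jointly convex on `δ > 0`
(quadratic-over-linear, by Sedrakyan's inequality). -/

lemma add_sq_div_add_le (x y : ℝ) {a b : ℝ} (ha : 0 < a) (hb : 0 < b) :
    (x + y) ^ 2 / (a + b) ≤ x ^ 2 / a + y ^ 2 / b := by
  simpa [Fin.sum_univ_two] using Finset.sq_sum_div_le_sum_sq_div Finset.univ ![x, y]
    (g := ![a, b]) (by simp [Fin.forall_fin_two, ha, hb])

theorem ConvexOn.comp_of_mapsTo {𝕜 E α β : Type*} [Semiring 𝕜] [PartialOrder 𝕜]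
    [AddCommMonoid E] [SMul 𝕜 E] [AddCommMonoid α] [PartialOrder α] [SMul 𝕜 α]
    [AddCommMonoid β] [PartialOrder β] [SMul 𝕜 β] {s : Set E} {t : Set β} {f : E → β}
    {g : β → α} (hg : ConvexOn 𝕜 t g) (hg' : MonotoneOn g t) (hf : ConvexOn 𝕜 s f)
    (hst : MapsTo f s t) : ConvexOn 𝕜 s (g ∘ f) :=
  ⟨hf.1, fun _ hx _ hy _ _ ha hb hab =>
    (hg' (hst (hf.1 hx hy ha hb hab)) (hg.1 (hst hx) (hst hy) ha hb hab)
      (hf.2 hx hy ha hb hab)).trans (hg.2 (hst hx) (hst hy) ha hb hab)⟩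

open Classical in
noncomputable def extendByTop {E : Type*} (s : Set E) (f : E → ℝ) (x : E) : EReal :=
  if x ∈ s then f x else ⊤

lemma coe_mul_extendByTop_ne_bot {E : Type*} (s : Set E) (f : E → ℝ) (x : E) {t : ℝ}
    (ht : 0 ≤ t) : (t : EReal) * extendByTop s f x ≠ ⊥ := by
  unfold extendByTop
  split_ifs
  · exact_mod_cast EReal.coe_ne_bot _
  · simp [EReal.mul_ne_bot, ht]

lemma ConvexOn.extendByTop_le {E : Type*} [AddCommMonoid E] [Module ℝ E] {s : Set E}
    {f : E → ℝ} (hf : ConvexOn ℝ s f) (x y : E) {t : ℝ} (ht0 : 0 ≤ t) (ht1 : t ≤ 1) :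
    extendByTop s f (t • x + (1 - t) • y) ≤
      (t : EReal) * extendByTop s f x + ((1 - t : ℝ) : EReal) * extendByTop s f y := by
  rcases ht0.eq_or_lt with rfl | ht0
  · simp
  rcases ht1.eq_or_lt with rfl | ht1
  · simp
  by_cases hxy : x ∈ s ∧ y ∈ s
  · obtain ⟨hx, hy⟩ := hxy
    have hcomb := hf.1 hx hy ht0.le (sub_nonneg.2 ht1.le) (by ring)
    simp only [extendByTop, if_pos hx, if_pos hy, if_pos hcomb]
    exact_mod_cast hf.2 hx hy ht0.le (sub_nonneg.2 ht1.le) (by ring)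
  suffices (t : EReal) * extendByTop s f x + ((1 - t : ℝ) : EReal) * extendByTop s f y = ⊤ by
    rw [this]; exact le_top
  rcases not_and_or.1 hxy with hx | hy
  · rw [show extendByTop s f x = ⊤ from if_neg hx, EReal.coe_mul_top_of_pos ht0,
      EReal.top_add_of_ne_bot (coe_mul_extendByTop_ne_bot s f y (sub_nonneg.2 ht1.le))]
  · rw [show extendByTop s f y = ⊤ from if_neg hy, EReal.coe_mul_top_of_pos (sub_pos.2 ht1),
      EReal.add_top_of_ne_bot (coe_mul_extendByTop_ne_bot s f x ht0.le)]

lemma convexOn_posPart_sq_sub_two_mul : ConvexOn ℝ univ fun x : ℝ => (x ^ 2 - 2 * x)⁺ :=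
  ((Even.convexOn_pow even_two).sub ((LinearMap.lsmul ℝ ℝ 2).concaveOn convex_univ)).sup
    (convexOn_const 0 convex_univ)

lemma monotoneOn_posPart_sq_sub_two_mul :
    MonotoneOn (fun x : ℝ => (x ^ 2 - 2 * x)⁺) (Ici 0) := by
  intro x hx y _ hxy
  rcases le_or_gt (x + y) 2 with h | h
  · simp only [posPart_eq_zero.2 (by nlinarith [mem_Ici.1 hx] : x ^ 2 - 2 * x ≤ 0),
      posPart_nonneg]
  · exact posPart_mono (by nlinarith)

lemma frobSq_nonneg (F : Mat2) : 0 ≤ frobSq F := by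
  unfold frobSq
  positivity

lemma frobSq_smul (c : ℝ) (F : Mat2) : frobSq (c • F) = c ^ 2 * frobSq F := by
  simp only [frobSq, Matrix.smul_apply, smul_eq_mul, mul_pow, Finset.mul_sum]

lemma two_mul_det_le_frobSq (F : Mat2) : 2 * F.det ≤ frobSq F := by
  simp only [frobSq, Fin.sum_univ_two, Matrix.det_fin_two]
  nlinarith [sq_nonneg (F 0 0 - F 1 1), sq_nonneg (F 0 1 + F 1 0)]

lemma frobSq_add_div_add_le (X Y : Mat2) {a b : ℝ} (ha : 0 < a) (hb : 0 < b) :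
    frobSq (X + Y) / (a + b) ≤ frobSq X / a + frobSq Y / b := by
  simp only [frobSq, Finset.sum_div, ← Finset.sum_add_distrib, Matrix.add_apply]
  gcongr with i _ j _
  exact add_sq_div_add_le _ _ ha hb

lemma convexOn_frobSq_div : ConvexOn ℝ {p : Mat2 × ℝ | 0 < p.2} fun p => frobSq p.1 / p.2 := by
  refine convexOn_iff_forall_pos.2
    ⟨convex_halfSpace_gt (LinearMap.snd ℝ Mat2 ℝ).isLinear 0, ?_⟩
  intro p hp q hq a b ha hb _
  calc frobSq (a • p.1 + b • q.1) / (a * p.2 + b * q.2)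
      ≤ frobSq (a • p.1) / (a * p.2) + frobSq (b • q.1) / (b * q.2) :=
        frobSq_add_div_add_le _ _ (mul_pos ha hp) (mul_pos hb hq)
    _ = a * (frobSq p.1 / p.2) + b * (frobSq q.1 / q.2) := by
        rw [frobSq_smul, frobSq_smul]
        field_simp

lemma convexOn_posPart_sq_sub_two_mul_comp_frobSq_div :
    ConvexOn ℝ {p : Mat2 × ℝ | 0 < p.2}
      ((fun x : ℝ => (x ^ 2 - 2 * x)⁺) ∘ fun p : Mat2 × ℝ => frobSq p.1 / p.2) :=
  (convexOn_posPart_sq_sub_two_mul.subset (subset_univ _) (convex_Ici 0)).comp_of_mapsTo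
    monotoneOn_posPart_sq_sub_two_mul convexOn_frobSq_div
    fun _ hp => div_nonneg (frobSq_nonneg _) (le_of_lt hp)

lemma WSVK_eq {F : Mat2} (hF : F.det ≠ 0) :
    WSVK F = (frobSq F / F.det) ^ 2 - 2 * (frobSq F / F.det) := by
  rw [Matrix.det_fin_two] at hF
  simp only [WSVK, frobSq, Matrix.det_fin_two, Fin.sum_univ_two, Matrix.sub_apply,
    Matrix.smul_apply, Matrix.mul_apply, Matrix.transpose_apply, Matrix.one_apply_eq,
    Matrix.one_apply_ne zero_ne_one, Matrix.one_apply_ne one_ne_zero, smul_eq_mul, sub_zero]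
  field_simp
  ring

lemma WSVK_eq_Kdist {F : Mat2} (hF : F.det ≠ 0) : WSVK F = 4 * (Kdist F ^ 2 - Kdist F) := by
  rw [WSVK_eq hF, Kdist]
  field_simp
  ring

lemma WSVK_eq_of_singVals {F : Mat2} {l1 l2 : ℝ} (h : SingVals F l1 l2) :
    WSVK F = (l1 / l2 - 1) ^ 2 + (l2 / l1 - 1) ^ 2 := by
  obtain ⟨h1, h2, hdet, hfrob⟩ := h
  rw [WSVK_eq (hdet ▸ (mul_pos h1 h2).ne'), ← hdet, ← hfrob]
  field_simp
  ring

lemma WSVK_eq_posPart {F : Mat2} (hF : 0 < F.det) :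
    WSVK F = ((frobSq F / F.det) ^ 2 - 2 * (frobSq F / F.det))⁺ := by
  have hq : 2 ≤ frobSq F / F.det := (le_div_iff₀ hF).2 (by linarith [two_mul_det_le_frobSq F])
  rw [WSVK_eq hF.ne', posPart_eq_self.2 (by nlinarith)]

theorem polyconvex_WSVK : Polyconvex WSVK :=
  ⟨extendByTop _ _, fun X Y _ ht0 ht1 =>
    convexOn_posPart_sq_sub_two_mul_comp_frobSq_div.extendByTop_le X Y ht0 ht1,
    fun F hF => by simp [extendByTop, hF, WSVK_eq_posPart]⟩

/-- The planar isochoric St. Venant–Kirchhoff energy satisfies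
`W(F) = (λ₁/λ₂ − 1)² + (λ₂/λ₁ − 1)² = 4(𝕂(F)² − 𝕂(F))` and is polyconvex. -/
theorem isochoric_SVK_representation_and_polyconvex :
    (∀ F : Mat2, 0 < F.det → ∀ l1 l2 : ℝ, SingVals F l1 l2 →
      WSVK F = (l1 / l2 - 1) ^ 2 + (l2 / l1 - 1) ^ 2 ∧
        WSVK F = 4 * ((Kdist F) ^ 2 - Kdist F)) ∧
      Polyconvex WSVK :=
  ⟨fun _ hF _ _ h => ⟨WSVK_eq_of_singVals h, WSVK_eq_Kdist hF.ne'⟩, polyconvex_WSVK⟩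
end

section
/- For every F ∈ ℝ^{2×2}, the squared Euclidean (Frobenius) distance of F to the conformal group CSO(2) satisfies inf{‖F − a·R‖² : a ∈ (0,∞), R ∈ SO(2)} = (1/2)·(‖F‖² − 2·det F). -/
/-!
Identify `ℝ²` with `ℂ`. Then `F` acts as `z ↦ α z + β z̄` with `α = conformalPart F`, and
CSO(2) is exactly the set of multiplications by nonzero `w ∈ ℂ`. The conformal and
anticonformal parts are Frobenius-orthogonal, so `‖F - w‖² = 2|α - w|² + 2|β|²` with
`2|β|² = (‖F‖² - 2 det F)/2`. Since `ℂ ∖ {0}` is dense, `|α - w|` can be made arbitrarily small.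
-/

open Matrix MeasureTheory Set

def conformalMatrix (w : ℂ) : Mat2 := !![w.re, -w.im; w.im, w.re]

noncomputable def conformalPart (F : Mat2) : ℂ := ⟨(F 0 0 + F 1 1) / 2, (F 1 0 - F 0 1) / 2⟩

lemma conformalMatrix_smul (a : ℝ) (w : ℂ) : conformalMatrix (a • w) = a • conformalMatrix w := by
  ext i j
  fin_cases i <;> fin_cases j <;> simp [conformalMatrix]

lemma SO2_conformalMatrix {u : ℂ} (hu : ‖u‖ = 1) : SO2 (conformalMatrix u) := by
  have h : u.re ^ 2 + u.im ^ 2 = 1 := by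
    rw [← pow_eq_one_iff_of_nonneg (norm_nonneg u) two_ne_zero, Complex.sq_norm,
      Complex.normSq_apply] at hu
    linarith
  refine ⟨?_, ?_⟩
  · ext i j
    fin_cases i <;> fin_cases j <;> simp [conformalMatrix, mul_apply, Fin.sum_univ_two] <;> linarith
  · simp [conformalMatrix, det_fin_two]
    linarith

lemma SO2.exists_eq_conformalMatrix {R : Mat2} (hR : SO2 R) :
    ∃ u : ℂ, ‖u‖ = 1 ∧ R = conformalMatrix u := by
  obtain ⟨hRR, hdet⟩ := hR
  have e00 := congrFun (congrFun hRR 0) 0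
  have e01 := congrFun (congrFun hRR 0) 1
  have e11 := congrFun (congrFun hRR 1) 1
  simp only [mul_apply, Fin.sum_univ_two, transpose_apply, one_apply] at e00 e01 e11
  rw [det_fin_two] at hdet
  norm_num at e00 e01 e11
  have h11 : R 1 1 = R 0 0 := by
    nlinarith [sq_nonneg (R 0 0 - R 1 1), sq_nonneg (R 0 1 + R 1 0)]
  have h01 : R 0 1 = -R 1 0 := by
    nlinarith [sq_nonneg (R 0 0 - R 1 1), sq_nonneg (R 0 1 + R 1 0)]
  refine ⟨⟨R 0 0, R 1 0⟩, ?_, ?_⟩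
  · rw [← pow_eq_one_iff_of_nonneg (norm_nonneg _) two_ne_zero, Complex.sq_norm,
      Complex.normSq_apply]
    dsimp only
    linarith
  · ext i j
    fin_cases i <;> fin_cases j <;> simp [conformalMatrix, h11, h01]

lemma CSO2_iff_exists_conformalMatrix {M : Mat2} :
    CSO2 M ↔ ∃ w : ℂ, w ≠ 0 ∧ M = conformalMatrix w := by
  constructor
  · rintro ⟨a, ha, R, hR, rfl⟩
    obtain ⟨u, hu, rfl⟩ := hR.exists_eq_conformalMatrix
    refine ⟨a • u, smul_ne_zero ha.ne' (by rintro rfl; simp at hu), ?_⟩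
    rw [conformalMatrix_smul]
  · rintro ⟨w, hw, rfl⟩
    have hw' : 0 < ‖w‖ := norm_pos_iff.2 hw
    refine ⟨‖w‖, hw', conformalMatrix (‖w‖⁻¹ • w), SO2_conformalMatrix ?_, ?_⟩
    · rw [norm_smul, norm_inv, norm_norm, inv_mul_cancel₀ hw'.ne']
    · rw [← conformalMatrix_smul, smul_inv_smul₀ hw'.ne']

lemma frobSq_sub_conformalMatrix (F : Mat2) (w : ℂ) :
    frobSq (F - conformalMatrix w) =
      (frobSq F - 2 * F.det) / 2 + 2 * ‖conformalPart F - w‖ ^ 2 := by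
  rw [Complex.sq_norm, Complex.normSq_apply]
  simp [frobSq, Fin.sum_univ_two, det_fin_two, conformalMatrix, conformalPart]
  ring

lemma exists_ne_zero_norm_sub_sq_lt {E : Type*} [NormedAddCommGroup E] [NormedSpace ℝ E]
    [Nontrivial E] (z : E) {ε : ℝ} (hε : 0 < ε) : ∃ w : E, w ≠ 0 ∧ ‖z - w‖ ^ 2 < ε := by
  obtain ⟨w, hw, hzw⟩ := (dense_compl_singleton (0 : E)).exists_dist_lt z (Real.sqrt_pos.2 hε)
  refine ⟨w, hw, ?_⟩
  rw [← dist_eq_norm]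
  exact (Real.lt_sqrt dist_nonneg).1 hzw

/-- The squared Euclidean (Frobenius) distance of `F ∈ ℝ^{2×2}` to the
conformal group CSO(2) equals `(‖F‖² − 2 det F)/2`. -/
theorem dist_sq_to_CSO2 (F : Mat2) :
    sInf {y : ℝ | ∃ a : ℝ, 0 < a ∧ ∃ R : Mat2, SO2 R ∧ y = frobSq (F - a • R)} =
      (frobSq F - 2 * F.det) / 2 := by
  set d := (frobSq F - 2 * F.det) / 2
  have hS : {y : ℝ | ∃ a : ℝ, 0 < a ∧ ∃ R : Mat2, SO2 R ∧ y = frobSq (F - a • R)} =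
      (fun w => d + 2 * ‖conformalPart F - w‖ ^ 2) '' {0}ᶜ := by
    ext y
    constructor
    · rintro ⟨a, ha, R, hR, rfl⟩
      obtain ⟨w, hw, hM⟩ := CSO2_iff_exists_conformalMatrix.1 ⟨a, ha, R, hR, rfl⟩
      exact ⟨w, hw, by rw [hM, frobSq_sub_conformalMatrix]⟩
    · rintro ⟨w, hw, rfl⟩
      obtain ⟨a, ha, R, hR, hM⟩ := CSO2_iff_exists_conformalMatrix.2 ⟨w, hw, rfl⟩
      exact ⟨a, ha, R, hR, by rw [← hM, frobSq_sub_conformalMatrix]⟩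
  rw [hS]
  refine csInf_eq_of_forall_ge_of_forall_gt_exists_lt ⟨_, 1, one_ne_zero, rfl⟩ ?_ ?_
  · rintro _ ⟨w, -, rfl⟩
    exact le_add_of_nonneg_right (by positivity)
  · intro y hy
    obtain ⟨w, hw, hlt⟩ :=
      exists_ne_zero_norm_sub_sq_lt (conformalPart F) (half_pos (sub_pos.2 hy))
    exact ⟨_, ⟨w, hw, rfl⟩, by dsimp only; linarith⟩
end
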